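/- Let G be a simple graph with n ≥ 4 vertices and m edges, ordered degree sequence Δ = d_1 ≥ ... ≥ d_{n−1} ≥ d_n = δ. Then M_1(G) ≥ δ² + (2m − δ)²/(n−1) + (1/2)(Δ − d_{n−1})² + (2(n−1)/(n−3))·((2m − δ)/(n−1) − (Δ + d_{n−1})/2)². -/

import Mathlib

/-!
Remove the three degrees `Δ`, `d_{n-1}`, `δ` from the degree sequence. Cauchy–Schwarz on the
`n - 3` remaining degrees, whose sum is `2m - δ - Δ - d_{n-1}`, bounds their squares from below,
and an exact algebraic identity rewrites `Δ² + d_{n-1}² + (sum of the rest)² / (n - 3)` as the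
right-hand side minus `δ²`.
-/

open Finset

lemma sq_add_sq_add_sq_div_eq (a b p k : ℝ) (hk : k ≠ 0) (hk2 : k + 2 ≠ 0) :
    a ^ 2 + b ^ 2 + p ^ 2 / k
      = (a + b + p) ^ 2 / (k + 2) + 1 / 2 * (a - b) ^ 2
        + 2 * (k + 2) / k * ((a + b + p) / (k + 2) - (a + b) / 2) ^ 2 := by
  field_simp
  ring

lemma le_sum_sq_of_three_ne {ι : Type*} [Fintype ι] [DecidableEq ι] (x : ι → ℝ)
    {i j l : ι} (hij : i ≠ j) (hil : i ≠ l) (hjl : j ≠ l) (hcard : 3 < Fintype.card ι) :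
    let N : ℝ := Fintype.card ι
    x l ^ 2 + (∑ t, x t - x l) ^ 2 / (N - 1) + 1 / 2 * (x i - x j) ^ 2
        + 2 * (N - 1) / (N - 3) * ((∑ t, x t - x l) / (N - 1) - (x i + x j) / 2) ^ 2
      ≤ ∑ t, x t ^ 2 := by
  intro N
  set s := ((univ.erase i).erase j).erase l
  have hj : j ∈ univ.erase i := mem_erase.2 ⟨hij.symm, mem_univ j⟩
  have hl : l ∈ (univ.erase i).erase j :=
    mem_erase.2 ⟨hjl.symm, mem_erase.2 ⟨hil.symm, mem_univ l⟩⟩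
  have split (y : ι → ℝ) : ∑ t, y t = y i + y j + y l + ∑ t ∈ s, y t := by
    rw [← add_sum_erase _ _ (mem_univ i), ← add_sum_erase _ _ hj, ← add_sum_erase _ _ hl]
    ring
  have hs : (#s : ℝ) = N - 3 := by
    rw [card_erase_of_mem hl, card_erase_of_mem hj, card_erase_of_mem (mem_univ i), card_univ,
      Nat.sub_sub, Nat.sub_sub, Nat.cast_sub (by omega)]
    norm_num [N]
  have hN : (3 : ℝ) < N := by simp only [N]; exact_mod_cast hcard
  have cauchy_schwarz : (∑ t ∈ s, x t) ^ 2 / (N - 3) ≤ ∑ t ∈ s, x t ^ 2 := by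
    rw [div_le_iff₀ (by linarith), ← hs, mul_comm]
    exact sq_sum_le_card_mul_sum_sq
  have identity := sq_add_sq_add_sq_div_eq (x i) (x j) (∑ t ∈ s, x t) (N - 3)
    (by linarith) (by linarith)
  rw [show N - 3 + 2 = N - 1 by ring] at identity
  rw [split, split fun t => x t ^ 2, show x i + x j + x l + ∑ t ∈ s, x t - x l
    = x i + x j + ∑ t ∈ s, x t by ring]
  linarith

theorem stmt10 (n : ℕ) (hn : 4 ≤ n) {V : Type*} [Fintype V] [DecidableEq V]
    (G : SimpleGraph V) [DecidableRel G.Adj]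
    (m : ℕ) (hm : m = G.edgeFinset.card)
    (e : Fin n ≃ V) (d : Fin n → ℕ) (hd : ∀ i, d i = G.degree (e i)) :
    ∑ v : V, (G.degree v : ℝ) ^ 2 ≥
      (d ⟨n - 1, by omega⟩ : ℝ) ^ 2
      + (2 * (m : ℝ) - (d ⟨n - 1, by omega⟩ : ℝ)) ^ 2 / ((n : ℝ) - 1)
      + (1 / 2) * ((d ⟨0, by omega⟩ : ℝ) - (d ⟨n - 2, by omega⟩ : ℝ)) ^ 2
      + (2 * ((n : ℝ) - 1) / ((n : ℝ) - 3)) *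
          ((2 * (m : ℝ) - (d ⟨n - 1, by omega⟩ : ℝ)) / ((n : ℝ) - 1)
            - ((d ⟨0, by omega⟩ : ℝ) + (d ⟨n - 2, by omega⟩ : ℝ)) / 2) ^ 2 := by
  have sum_sq : ∑ v : V, (G.degree v : ℝ) ^ 2 = ∑ i, (d i : ℝ) ^ 2 := by
    simp only [← e.sum_comp, hd]
  have sum_deg : ∑ i, (d i : ℝ) = 2 * m := by
    simp only [hd, e.sum_comp fun v => (G.degree v : ℝ), hm]
    exact_mod_cast G.sum_degrees_eq_twice_card_edges
  have key := le_sum_sq_of_three_ne (fun i => (d i : ℝ))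
    (i := ⟨0, by omega⟩) (j := ⟨n - 2, by omega⟩) (l := ⟨n - 1, by omega⟩)
    (by simp only [ne_eq, Fin.ext_iff]; omega) (by simp only [ne_eq, Fin.ext_iff]; omega)
    (by simp only [ne_eq, Fin.ext_iff]; omega) (by simp only [Fintype.card_fin]; omega)
  simp only [Fintype.card_fin, sum_deg] at key
  rw [sum_sq]
  exact key
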